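/- arXiv:2503.04326 — 3 statements merged into one kernel-verified Lean document; each statement's English description precedes it below -/
import Mathlib

section
/- Let P be a probability measure on a measurable space (Ω, 𝒜), and let Z : Ω → ℝ be a measurable function with Z > 0 P-almost everywhere and ∫ Z dP = 1. Define the probability measure P⋆ := P.withDensity Z. Then for every probability measure Q absolutely continuous with respect to P such that KL(Q ∥ P) < ∞ and log Z is Q-integrable, one has the identity ∫ log Z dQ − KL(Q ∥ P) = −KL(Q ∥ P⋆) ≤ 0, with equality to 0 if and only if Q = P⋆. In particular, P⋆ is the unique maximizer of Q ↦ ∫ log Z dQ − KL(Q ∥ P) over such measures Q. -/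
open MeasureTheory

/-- The Kullback–Leibler divergence `∫ log (dQ/dP) dQ` of `Q` with respect to `P`,
as a real number (finite when `Q ≪ P` and the log-likelihood ratio is `Q`-integrable). -/
noncomputable def klReal {Ω : Type*} [MeasurableSpace Ω] (Q P : Measure Ω) : ℝ :=
  ∫ ω, llr Q P ω ∂Q

open Real in
/-- Gibbs' inequality with equality case. -/
lemma gibbs_aux {Ω : Type*} [MeasurableSpace Ω] (Q ν : Measure Ω)
    [IsProbabilityMeasure Q] [IsProbabilityMeasure ν] (hQν : Q ≪ ν)
    (hint : Integrable (llr Q ν) Q) :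
    0 ≤ klReal Q ν ∧ (klReal Q ν = 0 ↔ Q = ν) := by
  have hint' : Integrable (llr ν Q) Q := hint.neg.congr (neg_llr hQν)
  have h2 : ∫ x, llr ν Q x ∂Q = - klReal Q ν := by
    rw [klReal, ← integral_neg]
    exact (integral_congr_ae (neg_llr hQν)).symm
  have hD_int : Integrable (fun x => (ν.rnDeriv Q x).toReal) Q :=
    Measure.integrable_toReal_rnDeriv
  have hD_le : ∫ x, (ν.rnDeriv Q x).toReal ∂Q ≤ 1 := by
    have h := Measure.setIntegral_toReal_rnDeriv_le (μ := ν) (ν := Q)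
      (s := Set.univ) (measure_ne_top ν _)
    simpa [setIntegral_univ] using h
  have hpos : ∀ᵐ x ∂Q, 0 < (ν.rnDeriv Q x).toReal := by
    filter_upwards [Measure.rnDeriv_pos' hQν, Measure.rnDeriv_lt_top ν Q] with x h1 h2
    exact ENNReal.toReal_pos h1.ne' h2.ne
  set g : Ω → ℝ := fun x => (ν.rnDeriv Q x).toReal - 1 - llr ν Q x with hg_def
  have hg_int : Integrable g Q := (hD_int.sub (integrable_const 1)).sub hint'
  have hg_nonneg : 0 ≤ᵐ[Q] g := by
    filter_upwards [hpos] with x hx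
    have := log_le_sub_one_of_pos hx
    simp only [hg_def, llr, Pi.zero_apply]
    linarith
  have hg_int_eq : ∫ x, g x ∂Q
      = (∫ x, (ν.rnDeriv Q x).toReal ∂Q) - 1 + klReal Q ν := by
    have e1 : ∫ x, ((ν.rnDeriv Q x).toReal - 1) - llr ν Q x ∂Q
        = (∫ x, ((ν.rnDeriv Q x).toReal - 1) ∂Q) - ∫ x, llr ν Q x ∂Q :=
      integral_sub (hD_int.sub (integrable_const 1)) hint'
    have e2 : ∫ x, ((ν.rnDeriv Q x).toReal - 1) ∂Q
        = (∫ x, (ν.rnDeriv Q x).toReal ∂Q) - 1 := by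
      rw [integral_sub hD_int (integrable_const 1)]
      simp
    rw [e2, h2] at e1
    simp only [hg_def]
    rw [e1]
    ring
  have hg_nonneg' : 0 ≤ ∫ x, g x ∂Q := integral_nonneg_of_ae hg_nonneg
  have h_nn : 0 ≤ klReal Q ν := by linarith
  refine ⟨h_nn, ?_, ?_⟩
  · intro h0
    have hIg : ∫ x, g x ∂Q = 0 := by linarith
    have hg0 : g =ᵐ[Q] 0 := (integral_eq_zero_iff_of_nonneg_ae hg_nonneg hg_int).mp hIg
    have h_one : ν.rnDeriv Q =ᵐ[Q] fun _ => (1 : ENNReal) := by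
      filter_upwards [hg0, hpos] with x hx hxpos
      have hx' : (ν.rnDeriv Q x).toReal = 1 := by
        by_contra hne
        have := log_lt_sub_one_of_pos hxpos hne
        simp only [hg_def, llr, Pi.zero_apply] at hx
        linarith
      exact (ENNReal.toReal_eq_one_iff _).mp hx'
    have hwd : Q.withDensity (ν.rnDeriv Q) = Q := by
      rw [withDensity_congr_ae h_one]
      exact withDensity_one (μ := Q)
    have hdec := (ν.haveLebesgueDecomposition_add Q)
    rw [hwd] at hdec
    have huniv : ν.singularPart Q Set.univ = 0 := by
      have := congrArg (fun m : Measure Ω => m Set.univ) hdec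
      simp only [Measure.add_apply, measure_univ] at this
      have h1 : ν.singularPart Q Set.univ + 1 = 0 + 1 := by
        rw [zero_add]; exact this.symm
      exact WithTop.add_right_cancel ENNReal.one_ne_top h1
    have hsing0 : ν.singularPart Q = 0 := Measure.measure_univ_eq_zero.mp huniv
    rw [hsing0, zero_add] at hdec
    exact hdec.symm
  · intro h
    subst h
    have hzero : llr Q Q =ᵐ[Q] fun _ => (0 : ℝ) := by
      filter_upwards [Measure.rnDeriv_self Q] with x hx
      simp [llr, hx]
    rw [klReal, integral_congr_ae hzero, integral_zero]

/-- Donsker–Varadhan variational characterization of the posterior: for `P⋆ = P.withDensity Z`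
with likelihood `Z > 0` `P`-a.e. of unit integral, and any probability measure `Q ≪ P` with
finite KL divergence to `P` and `Q`-integrable `log Z`, one has
`∫ log Z dQ − KL(Q ∥ P) = −KL(Q ∥ P⋆) ≤ 0`, with equality iff `Q = P⋆`. -/
theorem donsker_varadhan_posterior
    {Ω : Type*} [MeasurableSpace Ω] (P : Measure Ω) [IsProbabilityMeasure P]
    (Z : Ω → ℝ) (hZmeas : Measurable Z) (hZpos : ∀ᵐ ω ∂P, 0 < Z ω)
    (hZint : ∫ ω, Z ω ∂P = 1)
    (Pstar : Measure Ω) (hPstar : Pstar = P.withDensity fun ω => ENNReal.ofReal (Z ω))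
    (Q : Measure Ω) [IsProbabilityMeasure Q] (hQP : Q ≪ P)
    (hKL : Integrable (llr Q P) Q)
    (hlogZ : Integrable (fun ω => Real.log (Z ω)) Q) :
    (∫ ω, Real.log (Z ω) ∂Q) - klReal Q P = - klReal Q Pstar ∧
      (∫ ω, Real.log (Z ω) ∂Q) - klReal Q P ≤ 0 ∧
      ((∫ ω, Real.log (Z ω) ∂Q) - klReal Q P = 0 ↔ Q = Pstar) := by
  have hZintP : Integrable Z P := by
    by_contra h
    rw [integral_undef h] at hZint
    exact one_ne_zero hZint.symm
  have h_exp_eq : (fun ω => Z ω) =ᵐ[P] fun ω => Real.exp (Real.log (Z ω)) := by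
    filter_upwards [hZpos] with ω hω
    rw [Real.exp_log hω]
  have hexpP : Integrable (fun ω => Real.exp (Real.log (Z ω))) P :=
    hZintP.congr h_exp_eq
  have hIexp : ∫ ω, Real.exp (Real.log (Z ω)) ∂P = 1 := by
    rw [← integral_congr_ae h_exp_eq]; exact hZint
  have h_tilted : P.tilted (fun ω => Real.log (Z ω)) = Pstar := by
    rw [hPstar, Measure.tilted, hIexp]
    refine withDensity_congr_ae ?_
    filter_upwards [hZpos] with ω hω
    rw [div_one, Real.exp_log hω]
  haveI : IsProbabilityMeasure Pstar := by
    rw [← h_tilted]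
    exact isProbabilityMeasure_tilted hexpP
  have hQPstar : Q ≪ Pstar := by
    rw [← h_tilted]
    exact hQP.trans (absolutelyContinuous_tilted hexpP)
  have hint_star : Integrable (llr Q Pstar) Q := by
    rw [← h_tilted]
    exact integrable_llr_tilted_right hQP hlogZ hKL hexpP
  have key : klReal Q Pstar = klReal Q P - ∫ ω, Real.log (Z ω) ∂Q := by
    have h := integral_llr_tilted_right hQP hlogZ hexpP hKL
    rw [h_tilted, hIexp, Real.log_one, add_zero] at h
    exact h
  obtain ⟨hnn, hiff⟩ := gibbs_aux Q Pstar hQPstar hint_star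
  refine ⟨by linarith, by linarith, ?_⟩
  constructor
  · intro h0
    exact hiff.mp (by linarith)
  · intro h
    have := hiff.mpr h
    linarith
end

section
/- Let (E, ℰ) be a measurable space, μ a probability measure on E, and Q a Markov kernel from E to E such that the joint measure λ(dw, dw') = μ(dw) Q(w, dw') on E × E (the composition-product μ ⊗ Q) is symmetric, i.e. invariant under the pushforward by the swap map (w, w') ↦ (w', w). Let h : E → ℝ be a measurable function with h > 0 everywhere and ∫ h dμ = 1, and set π := μ.withDensity h. Define the acceptance probability α(z, z') := min(h(z')/h(z), 1). Then detailed balance holds: the measure on E × E given by the density (z, z') ↦ α(z, z') with respect to π ⊗ Q is symmetric, i.e. the pushforward of (π ⊗ Q).withDensity α under the swap map (z, z') ↦ (z', z) equals (π ⊗ Q).withDensity α. -/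
open MeasureTheory ProbabilityTheory
open scoped ENNReal

lemma MH_map_swap_withDensity {E : Type*} [MeasurableSpace E] (ν : Measure (E × E))
    (f : E × E → ℝ≥0∞) (hf : Measurable f) :
    (ν.withDensity (f ∘ Prod.swap)).map Prod.swap = (ν.map Prod.swap).withDensity f := by
  ext s hs
  rw [Measure.map_apply measurable_swap hs,
    withDensity_apply _ (hs.preimage measurable_swap), withDensity_apply _ hs,
    setLIntegral_map hs hf measurable_swap]
  rfl

lemma MH_compProd_withDensity {E : Type*} [MeasurableSpace E] (μ : Measure E)
    [IsProbabilityMeasure μ] (Q : Kernel E E) [IsMarkovKernel Q]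
    (g : E → ℝ≥0∞) (hg : Measurable g) :
    (μ.withDensity g) ⊗ₘ Q = (μ ⊗ₘ Q).withDensity (fun p => g p.1) := by
  ext s hs
  have hg1 : Measurable fun p : E × E => g p.1 := hg.comp measurable_fst
  rw [Measure.compProd_apply hs,
    lintegral_withDensity_eq_lintegral_mul μ hg (Kernel.measurable_kernel_prodMk_left hs),
    withDensity_apply _ hs, ← lintegral_indicator hs,
    Measure.lintegral_compProd (hg1.indicator hs)]
  refine lintegral_congr fun a => ?_
  simp only [Pi.mul_apply]
  calc g a * Q a (Prod.mk a ⁻¹' s)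
      = ∫⁻ b, (Prod.mk a ⁻¹' s).indicator (fun _ => g a) b ∂Q a :=
        (lintegral_indicator_const ((measurable_prodMk_left hs)) _).symm
    _ = ∫⁻ b, s.indicator (fun p : E × E => g p.1) (a, b) ∂Q a := by
        refine lintegral_congr fun b => ?_
        by_cases hb : (a, b) ∈ s <;> simp [Set.indicator, hb]

/-- Detailed balance for the Metropolis–Hastings acceptance probability: if the joint measure
`μ ⊗ₘ Q` is symmetric under the swap map, `π = μ.withDensity h` with `h > 0` of unit integral,
and `α(z, z') = min(h z' / h z, 1)`, then `(π ⊗ₘ Q).withDensity α` is symmetric under swap. -/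
theorem metropolis_hastings_detailed_balance
    {E : Type*} [MeasurableSpace E] (μ : Measure E) [IsProbabilityMeasure μ]
    (Q : Kernel E E) [IsMarkovKernel Q]
    (hsym : (μ ⊗ₘ Q).map Prod.swap = μ ⊗ₘ Q)
    (h : E → ℝ) (hmeas : Measurable h) (hpos : ∀ z, 0 < h z)
    (hint : ∫ z, h z ∂μ = 1)
    (π : Measure E) (hπ : π = μ.withDensity fun z => ENNReal.ofReal (h z))
    (α : E × E → ℝ) (hα : α = fun p => min (h p.2 / h p.1) 1) :
    ((π ⊗ₘ Q).withDensity fun p => ENNReal.ofReal (α p)).map Prod.swap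
      = (π ⊗ₘ Q).withDensity fun p => ENNReal.ofReal (α p) := by
  have hm1 : Measurable fun p : E × E => ENNReal.ofReal (h p.1) :=
    (hmeas.comp measurable_fst).ennreal_ofReal
  have hmα : Measurable fun p : E × E => ENNReal.ofReal (min (h p.2 / h p.1) 1) :=
    (((hmeas.comp measurable_snd).div (hmeas.comp measurable_fst)).min
      measurable_const).ennreal_ofReal
  have hkey : (π ⊗ₘ Q).withDensity (fun p => ENNReal.ofReal (α p))
      = (μ ⊗ₘ Q).withDensity (fun p => ENNReal.ofReal (min (h p.2) (h p.1))) := by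
    subst hα hπ
    rw [MH_compProd_withDensity μ Q _ hmeas.ennreal_ofReal,
      ← withDensity_mul _ hm1 hmα]
    congr 1
    funext p
    simp only [Pi.mul_apply]
    rw [← ENNReal.ofReal_mul (hpos p.1).le]
    congr 1
    rw [mul_min_of_nonneg _ _ (hpos p.1).le, mul_one,
      mul_div_cancel₀ _ (hpos p.1).ne']
  have hswap : (fun p : E × E => ENNReal.ofReal (min (h p.2) (h p.1)))
      = (fun p : E × E => ENNReal.ofReal (min (h p.2) (h p.1))) ∘ Prod.swap := by
    funext p; simp [min_comm]
  rw [hkey]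
  conv_lhs => rw [hswap]
  have hfm : Measurable fun p : E × E => ENNReal.ofReal (min (h p.2) (h p.1)) :=
    ((hmeas.comp measurable_snd).min (hmeas.comp measurable_fst)).ennreal_ofReal
  rw [MH_map_swap_withDensity (μ ⊗ₘ Q)
    (fun p : E × E => ENNReal.ofReal (min (h p.2) (h p.1))) hfm, hsym]
end

section
/- Let (E, ℰ) be a measurable space, μ a probability measure on E, and Q a Markov kernel from E to E such that the measure μ ⊗ Q on E × E is symmetric under the swap map (w, w') ↦ (w', w). Let h : E → ℝ be measurable with h > 0 everywhere and ∫ h dμ = 1, set π := μ.withDensity h, and define α(z, z') := min(h(z')/h(z), 1). Define the Metropolis–Hastings kernel K from E to E by K(z, A) := ∫ α(z, z') 1_A(z') Q(z, dz') + (1 − ∫ α(z, z') Q(z, dz')) · 1_A(z) for measurable A ⊆ E. Then π is a stationary distribution of K: the measure π.bind K (i.e. A ↦ ∫ K(z, A) π(dz)) equals π. -/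
/-! Swap symmetry of `μ ⊗ₘ Q` lets one exchange the two variables of a double integral against
`μ` and `Q`. Since `h z * α z z' = min (h z) (h z')` is symmetric (detailed balance), the mass that
`π` sends into `A` through accepted proposals equals the mass in `A` that accepts a proposal; the
rejected mass stays in place, so `A` gains exactly what it loses. -/

open MeasureTheory ProbabilityTheory
open scoped ENNReal

namespace MeasureTheory.Measure

variable {E : Type*} [MeasurableSpace E] {μ : Measure E} [SFinite μ]
  {Q : Kernel E E} [IsSFiniteKernel Q]

lemma lintegral_lintegral_comm_of_compProd_swap (hsym : (μ ⊗ₘ Q).map Prod.swap = μ ⊗ₘ Q)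
    {F : E → E → ℝ≥0∞} (hF : Measurable (Function.uncurry F)) :
    ∫⁻ z, ∫⁻ z', F z z' ∂Q z ∂μ = ∫⁻ z, ∫⁻ z', F z' z ∂Q z ∂μ := calc
  _ = ∫⁻ p, Function.uncurry F p ∂(μ ⊗ₘ Q) := (lintegral_compProd hF).symm
  _ = ∫⁻ p, Function.uncurry F p.swap ∂(μ ⊗ₘ Q) := by
      conv_lhs => rw [← hsym]
      exact lintegral_map hF measurable_swap
  _ = _ := lintegral_compProd (hF.comp measurable_swap)

lemma lintegral_mul_lintegral_indicator_eq_setLIntegral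
    (hsym : (μ ⊗ₘ Q).map Prod.swap = μ ⊗ₘ Q) {g : E → ℝ≥0∞} (hg : Measurable g)
    {a : E → E → ℝ≥0∞} (ha : Measurable (Function.uncurry a))
    (hbal : ∀ z z', g z * a z z' = g z' * a z' z) {A : Set E} (hA : MeasurableSet A) :
    ∫⁻ z, g z * ∫⁻ z', a z z' * A.indicator 1 z' ∂Q z ∂μ
      = ∫⁻ z in A, g z * ∫⁻ z', a z z' ∂Q z ∂μ := by
  calc ∫⁻ z, g z * ∫⁻ z', a z z' * A.indicator 1 z' ∂Q z ∂μ
      = ∫⁻ z, ∫⁻ z', g z * a z z' * A.indicator 1 z' ∂Q z ∂μ := by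
        refine lintegral_congr fun z => ?_
        rw [← lintegral_const_mul _ (by fun_prop)]
        simp only [mul_assoc]
    _ = ∫⁻ z, ∫⁻ z', A.indicator 1 z * (g z * a z z') ∂Q z ∂μ := by
        rw [lintegral_lintegral_comm_of_compProd_swap hsym (by fun_prop)]
        simp only [hbal, mul_comm]
    _ = ∫⁻ z, A.indicator (fun z => g z * ∫⁻ z', a z z' ∂Q z) z ∂μ := by
        refine lintegral_congr fun z => ?_
        rw [lintegral_const_mul _ (by fun_prop), lintegral_const_mul _ (by fun_prop)]
        by_cases hz : z ∈ A <;> simp [hz]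
    _ = ∫⁻ z in A, g z * ∫⁻ z', a z z' ∂Q z ∂μ := lintegral_indicator hA _

theorem withDensity_bind_eq_self_of_detailedBalance
    (hsym : (μ ⊗ₘ Q).map Prod.swap = μ ⊗ₘ Q) {g : E → ℝ≥0∞} (hg : Measurable g)
    {a : E → E → ℝ≥0∞} (ha : Measurable (Function.uncurry a))
    (ha_le : ∀ z, ∫⁻ z', a z z' ∂Q z ≤ 1)
    (hbal : ∀ z z', g z * a z z' = g z' * a z' z) (K : Kernel E E)
    (hK : ∀ z A, MeasurableSet A → K z A = ∫⁻ z', a z z' * A.indicator 1 z' ∂Q z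
        + (1 - ∫⁻ z', a z z' ∂Q z) * A.indicator 1 z) :
    (μ.withDensity g).bind (fun z => K z) = μ.withDensity g := by
  ext A hA
  set I := fun z => ∫⁻ z', a z z' ∂Q z
  calc (μ.withDensity g).bind (fun z => K z) A
      = ∫⁻ z, g z * K z A ∂μ := by
        rw [bind_apply hA K.measurable.aemeasurable,
          lintegral_withDensity_eq_lintegral_mul _ hg (K.measurable_coe hA)]
        rfl
    _ = ∫⁻ z, g z * ∫⁻ z', a z z' * A.indicator 1 z' ∂Q z ∂μ
          + ∫⁻ z, A.indicator (fun z => g z * (1 - I z)) z ∂μ := by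
        rw [← lintegral_add_left (by fun_prop)]
        refine lintegral_congr fun z => ?_
        by_cases hz : z ∈ A <;> simp [hK z A hA, hz, I, mul_add]
    _ = ∫⁻ z in A, g z * I z + g z * (1 - I z) ∂μ := by
        rw [lintegral_mul_lintegral_indicator_eq_setLIntegral hsym hg ha hbal hA,
          lintegral_indicator hA, ← lintegral_add_left (by fun_prop)]
    _ = μ.withDensity g A := by
        rw [withDensity_apply _ hA]
        refine lintegral_congr fun z => ?_
        rw [← mul_add, add_tsub_cancel_of_le (ha_le z), mul_one]

end MeasureTheory.Measure

lemma mul_min_div_one {x y : ℝ} (hx : 0 < x) : x * min (y / x) 1 = min y x := by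
  rw [mul_min_of_nonneg _ _ hx.le, mul_div_cancel₀ _ hx.ne', mul_one]

theorem metropolis_hastings_stationary_general
    {E : Type*} [MeasurableSpace E] (μ : Measure E) [IsProbabilityMeasure μ]
    (Q : Kernel E E) [IsMarkovKernel Q]
    (hsym : (μ ⊗ₘ Q).map Prod.swap = μ ⊗ₘ Q)
    (h : E → ℝ) (hmeas : Measurable h) (hpos : ∀ z, 0 < h z)
    (π : Measure E) (hπ : π = μ.withDensity fun z => ENNReal.ofReal (h z))
    (α : E → E → ℝ) (hα : α = fun z z' => min (h z' / h z) 1)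
    (K : Kernel E E)
    (hK : ∀ z : E, ∀ A : Set E, MeasurableSet A →
      K z A = (∫⁻ z', ENNReal.ofReal (α z z') * A.indicator 1 z' ∂(Q z))
        + (1 - ∫⁻ z', ENNReal.ofReal (α z z') ∂(Q z)) * A.indicator 1 z) :
    π.bind (fun z => K z) = π := by
  subst hπ hα
  have hbal : ∀ z z', ENNReal.ofReal (h z) * ENNReal.ofReal (min (h z' / h z) 1)
      = ENNReal.ofReal (h z') * ENNReal.ofReal (min (h z / h z') 1) := fun z z' => by
    rw [← ENNReal.ofReal_mul (hpos z).le, ← ENNReal.ofReal_mul (hpos z').le,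
      mul_min_div_one (hpos z), mul_min_div_one (hpos z'), min_comm]
  have hacc : ∀ z, ∫⁻ z', ENNReal.ofReal (min (h z' / h z) 1) ∂Q z ≤ 1 := fun z => calc
    _ ≤ ∫⁻ _, 1 ∂Q z := lintegral_mono fun _ => ENNReal.ofReal_le_one.2 (min_le_right _ _)
    _ = 1 := by simp
  exact Measure.withDensity_bind_eq_self_of_detailedBalance hsym hmeas.ennreal_ofReal
    (by fun_prop) hacc hbal K hK

/-- Stationarity of the Metropolis–Hastings chain: with a swap-symmetric proposal joint measure
`μ ⊗ₘ Q`, target `π = μ.withDensity h` (`h > 0`, unit integral), acceptance probability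
`α(z, z') = min(h z' / h z, 1)`, the Metropolis–Hastings kernel
`K(z, A) = ∫ α(z, z') 1_A(z') Q(z, dz') + (1 − ∫ α(z, z') Q(z, dz')) 1_A(z)`
has `π` as stationary distribution: `π.bind K = π`. -/
theorem metropolis_hastings_stationary
    {E : Type*} [MeasurableSpace E] (μ : Measure E) [IsProbabilityMeasure μ]
    (Q : Kernel E E) [IsMarkovKernel Q]
    (hsym : (μ ⊗ₘ Q).map Prod.swap = μ ⊗ₘ Q)
    (h : E → ℝ) (hmeas : Measurable h) (hpos : ∀ z, 0 < h z)
    (hint : ∫ z, h z ∂μ = 1)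
    (π : Measure E) (hπ : π = μ.withDensity fun z => ENNReal.ofReal (h z))
    (α : E → E → ℝ) (hα : α = fun z z' => min (h z' / h z) 1)
    (K : Kernel E E) [IsMarkovKernel K]
    (hK : ∀ z : E, ∀ A : Set E, MeasurableSet A →
      K z A = (∫⁻ z', ENNReal.ofReal (α z z') * A.indicator 1 z' ∂(Q z))
        + (1 - ∫⁻ z', ENNReal.ofReal (α z z') ∂(Q z)) * A.indicator 1 z) :
    π.bind (fun z => K z) = π :=
  metropolis_hastings_stationary_general μ Q hsym h hmeas hpos π hπ α hα K hK
end
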